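/- arXiv:2407.17099 — 7 statements merged into one kernel-verified Lean document; each statement's English description precedes it below -/
import Mathlib

section
/- With the OPA closed-form weights w_{ijr} = (∑_{h=r}^{K} 1/h)/(t_i s_{ij} K (∑_{p=1}^{I}1/p)(∑_{q=1}^{J}1/q)) and z* = 1/(K(∑_{p=1}^{I}1/p)(∑_{q=1}^{J}1/q)), the OPA feasibility constraints hold: t_i s_{ij} r (w_{ijr} − w_{ij,r+1}) ≥ z* for all 1 ≤ r ≤ K−1, and t_i s_{ij} K w_{ijK} ≥ z*, with equality in all cases. -/
open Finset

/-- The OPA closed-form solution satisfies the OPA feasibility constraints with equality. -/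
theorem stmt_6 (I J K : ℕ) (hI : 0 < I) (hJ : 0 < J) (hK : 0 < K)
    (ti si : ℕ) (hti : ti ∈ Finset.Icc 1 I) (hsi : si ∈ Finset.Icc 1 J)
    (zstar : ℝ)
    (hz : zstar = 1 / ((K : ℝ) * (∑ p ∈ Finset.Icc 1 I, (1 : ℝ) / p) *
      (∑ q ∈ Finset.Icc 1 J, (1 : ℝ) / q)))
    (w : ℕ → ℝ)
    (hw : ∀ r, w r =
      (∑ h ∈ Finset.Icc r K, (1 : ℝ) / h) /
        ((ti : ℝ) * (si : ℝ) * K * (∑ p ∈ Finset.Icc 1 I, (1 : ℝ) / p) *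
          (∑ q ∈ Finset.Icc 1 J, (1 : ℝ) / q))) :
    (∀ r, 1 ≤ r → r ≤ K - 1 →
      (ti : ℝ) * si * r * (w r - w (r + 1)) = zstar ∧
      zstar ≤ (ti : ℝ) * si * r * (w r - w (r + 1))) ∧
    ((ti : ℝ) * si * K * w K = zstar ∧ zstar ≤ (ti : ℝ) * si * K * w K) := by
  set S : ℝ := ∑ p ∈ Finset.Icc 1 I, (1 : ℝ) / p with hS
  set T : ℝ := ∑ q ∈ Finset.Icc 1 J, (1 : ℝ) / q with hT
  have hti1 : 1 ≤ ti := (Finset.mem_Icc.mp hti).1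
  have hsi1 : 1 ≤ si := (Finset.mem_Icc.mp hsi).1
  have htiR : (ti : ℝ) ≠ 0 := by positivity
  have hsiR : (si : ℝ) ≠ 0 := by positivity
  have hKR : (K : ℝ) ≠ 0 := by positivity
  have hSpos : 0 < S := by
    apply Finset.sum_pos
    · intro p hp
      have : 1 ≤ p := (Finset.mem_Icc.mp hp).1
      positivity
    · exact ⟨1, Finset.mem_Icc.mpr ⟨le_refl 1, hI⟩⟩
  have hTpos : 0 < T := by
    apply Finset.sum_pos
    · intro q hq
      have : 1 ≤ q := (Finset.mem_Icc.mp hq).1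
      positivity
    · exact ⟨1, Finset.mem_Icc.mpr ⟨le_refl 1, hJ⟩⟩
  have hS0 : S ≠ 0 := ne_of_gt hSpos
  have hT0 : T ≠ 0 := ne_of_gt hTpos
  constructor
  · intro r hr1 hrK
    have hrK' : r ≤ K := le_trans hrK (Nat.sub_le K 1)
    have hsplit : Finset.Icc r K = insert r (Finset.Icc (r+1) K) := by
      rw [Finset.Icc_eq_cons_Ioc hrK', Finset.cons_eq_insert, Finset.Icc_add_one_left_eq_Ioc]
    have hsum : ∑ h ∈ Finset.Icc r K, (1 : ℝ) / h
        = 1 / r + ∑ h ∈ Finset.Icc (r+1) K, (1 : ℝ) / h := by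
      rw [hsplit, Finset.sum_insert (by simp)]
    have hrR : (r : ℝ) ≠ 0 := by positivity
    have key : (ti : ℝ) * si * r * (w r - w (r + 1)) = zstar := by
      rw [hw r, hw (r+1), hsum, hz]
      field_simp
      ring
    exact ⟨key, le_of_eq key.symm⟩
  · have hsum : ∑ h ∈ Finset.Icc K K, (1 : ℝ) / h = 1 / K := by simp
    have key : (ti : ℝ) * si * K * w K = zstar := by
      rw [hw K, hsum, hz]
      field_simp
    exact ⟨key, le_of_eq key.symm⟩
end

section
/- Summing the OPA closed-form weights over ranks r gives the attribute-under-expert weight w*_{is} = 1/(t_i s_{ij} (∑_{p=1}^{I}1/p)(∑_{q=1}^{J}1/q)) = v_s^{RR}/(t_i ∑_{p=1}^{I}1/p), where v_s^{RR} = 1/(s_{ij} ∑_{q=1}^{J}1/q) is the rank reciprocal weight. -/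
/-!
Exchanging the order of summation, `∑_{r=1}^K ∑_{h=r}^K 1/h = ∑_{h=1}^K h · (1/h) = K`, which
cancels the factor `K` in the denominator of the OPA weights; the rest is rearranging a product
of inverses.
-/

open Finset

theorem sum_Icc_sum_Icc_eq_sum_nsmul {M : Type*} [AddCommMonoid M] (f : ℕ → M) (K : ℕ) :
    ∑ r ∈ Icc 1 K, ∑ h ∈ Icc r K, f h = ∑ h ∈ Icc 1 K, h • f h := by
  rw [sum_comm' (t' := Icc 1 K) (s' := fun h ↦ Icc 1 h) (fun r h ↦ by simp only [mem_Icc]; omega)]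
  simp only [sum_const, Nat.card_Icc, Nat.add_sub_cancel]

theorem sum_Icc_sum_Icc_one_div {𝕜 : Type*} [Field 𝕜] [CharZero 𝕜] (K : ℕ) :
    ∑ r ∈ Icc 1 K, ∑ h ∈ Icc r K, (1 : 𝕜) / h = K := by
  rw [sum_Icc_sum_Icc_eq_sum_nsmul]
  calc ∑ h ∈ Icc 1 K, h • ((1 : 𝕜) / h) = ∑ _h ∈ Icc 1 K, (1 : 𝕜) := by
        refine sum_congr rfl fun h hh ↦ ?_
        have : (h : 𝕜) ≠ 0 := by simp only [mem_Icc] at hh; exact_mod_cast (by omega : h ≠ 0)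
        rw [nsmul_eq_mul, mul_one_div_cancel this]
    _ = K := by simp

theorem stmt_8_general (I J K : ℕ) (hK : 0 < K)
    (ti sij : ℝ)
    (w : ℕ → ℝ)
    (hw : ∀ r, w r =
      (∑ h ∈ Finset.Icc r K, (1 : ℝ) / h) /
        (ti * sij * K * (∑ p ∈ Finset.Icc 1 I, (1 : ℝ) / p) *
          (∑ q ∈ Finset.Icc 1 J, (1 : ℝ) / q)))
    (vRR : ℝ)
    (hvRR : vRR = 1 / (sij * ∑ q ∈ Finset.Icc 1 J, (1 : ℝ) / q)) :
    ∑ r ∈ Finset.Icc 1 K, w r =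
      1 / (ti * sij * (∑ p ∈ Finset.Icc 1 I, (1 : ℝ) / p) *
        (∑ q ∈ Finset.Icc 1 J, (1 : ℝ) / q)) ∧
    ∑ r ∈ Finset.Icc 1 K, w r = vRR / (ti * ∑ p ∈ Finset.Icc 1 I, (1 : ℝ) / p) := by
  set P := ∑ p ∈ Finset.Icc 1 I, (1 : ℝ) / p
  set Q := ∑ q ∈ Finset.Icc 1 J, (1 : ℝ) / q
  have hK₀ : (K : ℝ) ≠ 0 := by exact_mod_cast hK.ne'
  have hsum : ∑ r ∈ Icc 1 K, w r = 1 / (ti * sij * P * Q) := by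
    rw [sum_congr rfl fun r _ ↦ hw r, ← sum_div, sum_Icc_sum_Icc_one_div]
    field_simp
  refine ⟨hsum, ?_⟩
  rw [hsum, hvRR]
  ring

/-- Summing OPA closed-form weights over ranks gives attribute-under-expert weights,
which equal rank reciprocal weights divided by the expert factor. -/
theorem stmt_8 (I J K : ℕ) (hI : 0 < I) (hJ : 0 < J) (hK : 0 < K)
    (ti sij : ℝ) (hti : 0 < ti) (hsij : 0 < sij)
    (w : ℕ → ℝ)
    (hw : ∀ r, w r =
      (∑ h ∈ Finset.Icc r K, (1 : ℝ) / h) /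
        (ti * sij * K * (∑ p ∈ Finset.Icc 1 I, (1 : ℝ) / p) *
          (∑ q ∈ Finset.Icc 1 J, (1 : ℝ) / q)))
    (vRR : ℝ)
    (hvRR : vRR = 1 / (sij * ∑ q ∈ Finset.Icc 1 J, (1 : ℝ) / q)) :
    ∑ r ∈ Finset.Icc 1 K, w r =
      1 / (ti * sij * (∑ p ∈ Finset.Icc 1 I, (1 : ℝ) / p) *
        (∑ q ∈ Finset.Icc 1 J, (1 : ℝ) / q)) ∧
    ∑ r ∈ Finset.Icc 1 K, w r = vRR / (ti * ∑ p ∈ Finset.Icc 1 I, (1 : ℝ) / p) :=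
  stmt_8_general I J K hK ti sij w hw vRR hvRR
end

section
/- Decomposability of OPA weights: for the closed-form OPA solution, the weight of the alternative ranked r under expert i, defined as w*_{ir} = ∑_{j=1}^{J} w*_{ijr}, equals W_i^Q · u_r, where W_i^Q = 1/(t_i ∑_{p=1}^{I}1/p) is the weight of expert i and u_r = (1/K)∑_{h=r}^{K}1/h depends only on the rank r. -/
open Finset

/-- Decomposability of OPA weights: the alternative weight under an expert equals the
expert weight times a rank-based net utility. -/
theorem stmt_9 (I J K : ℕ) (hI : 0 < I) (hJ : 0 < J) (hK : 0 < K)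
    (t : ℕ → ℕ) (s : ℕ → ℕ → ℕ)
    (ht : ∀ i ∈ Finset.Icc 1 I, t i ∈ Finset.Icc 1 I)
    (hs : ∀ i ∈ Finset.Icc 1 I,
      Set.BijOn (s i) (Finset.Icc 1 J : Finset ℕ) (Finset.Icc 1 J : Finset ℕ))
    (w : ℕ → ℕ → ℕ → ℝ)
    (hw : ∀ i j r, w i j r =
      (∑ h ∈ Finset.Icc r K, (1 : ℝ) / h) /
        ((t i : ℝ) * (s i j : ℝ) * K * (∑ p ∈ Finset.Icc 1 I, (1 : ℝ) / p) *
          (∑ q ∈ Finset.Icc 1 J, (1 : ℝ) / q)))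
    (W : ℕ → ℝ) (u : ℕ → ℝ)
    (hW : ∀ i, W i = 1 / ((t i : ℝ) * ∑ p ∈ Finset.Icc 1 I, (1 : ℝ) / p))
    (hu : ∀ r, u r = (1 / K) * ∑ h ∈ Finset.Icc r K, (1 : ℝ) / h) :
    ∀ i ∈ Finset.Icc 1 I, ∀ r,
      ∑ j ∈ Finset.Icc 1 J, w i j r = W i * u r := by
  intro i hi r
  obtain ⟨hmap, hinj, hsurj⟩ := hs i hi
  have hB : ∑ j ∈ Finset.Icc 1 J, (1 : ℝ) / (s i j) =
      ∑ q ∈ Finset.Icc 1 J, (1 : ℝ) / q := by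
    refine Finset.sum_nbij (s i) (fun a ha => by exact_mod_cast hmap ha) ?_ ?_ (fun _ _ => rfl)
    · exact fun a ha b hb h => hinj ha hb h
    · intro b hb
      obtain ⟨a, ha, rfl⟩ := hsurj hb
      exact ⟨a, by exact_mod_cast ha, rfl⟩
  have hBpos : (0 : ℝ) < ∑ q ∈ Finset.Icc 1 J, (1 : ℝ) / q := by
    apply Finset.sum_pos
    · intro q hq
      have : 0 < q := by
        have := (Finset.mem_Icc.mp hq).1; omega
      positivity
    · exact ⟨1, Finset.mem_Icc.mpr ⟨le_rfl, hJ⟩⟩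
  simp only [hw, hW, hu]
  have : ∀ j, (∑ h ∈ Finset.Icc r K, (1 : ℝ) / h) /
        ((t i : ℝ) * (s i j : ℝ) * K * (∑ p ∈ Finset.Icc 1 I, (1 : ℝ) / p) *
          (∑ q ∈ Finset.Icc 1 J, (1 : ℝ) / q)) =
      ((1 : ℝ) / (s i j)) * ((∑ h ∈ Finset.Icc r K, (1 : ℝ) / h) /
        ((t i : ℝ) * K * (∑ p ∈ Finset.Icc 1 I, (1 : ℝ) / p) *
          (∑ q ∈ Finset.Icc 1 J, (1 : ℝ) / q))) := by
    intro j; ring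
  rw [Finset.sum_congr rfl (fun j _ => this j), ← Finset.sum_mul, hB]
  rw [mul_div_assoc', mul_comm (∑ q ∈ Finset.Icc 1 J, (1:ℝ)/q), mul_div_mul_right _ _ hBpos.ne']
  ring
end

section
/- For the generalized linear program max z subject to (∑_{h=r}^{K_{ij}} 1/h)·z ≤ t_i s_{ij} w_{ijr} for all (i,j,r), ∑_{i,j,r} c_{ijr} w_{ijr} = 1, and w_{ijr} ≥ 0 (with c_{ijr} ≥ 1 integers and positive parameters t_i, s_{ij}), the optimal value is z* = 1/(∑_{i,j,r} c_{ijr}(∑_{h=r}^{K_{ij}}1/h)/(t_i s_{ij})), attained at w*_{ijr} = (∑_{h=r}^{K_{ij}}1/h) z*/(t_i s_{ij}); i.e., any feasible (z, w) satisfies z ≤ z*, and the stated (z*, w*) is feasible. -/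
open Finset

/-!
After dividing the constraints by `t i * s i j`, every feasible point satisfies
`w k ≥ a k * z` with `a k = (∑_{h=r}^{K} 1/h) / (t i * s i j) > 0`, so the budget constraint gives
`1 = ∑ c k * w k ≥ z * ∑ c k * a k`, i.e. `z ≤ 1 / ∑ c k * a k`. Taking every constraint tight,
`w k = a k * z`, meets this bound with equality.
-/

section LinearProgram

variable {ι : Type*} {S : Finset ι} {b c d : ι → ℝ}

theorem le_one_div_sum_of_feasible (hc : ∀ k ∈ S, 0 ≤ c k) (hd : ∀ k ∈ S, 0 < d k)
    (hD : 0 < ∑ k ∈ S, c k * b k / d k) {z : ℝ} {w : ι → ℝ}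
    (hz : ∀ k ∈ S, b k * z ≤ d k * w k) (hw : ∑ k ∈ S, c k * w k = 1) :
    z ≤ 1 / ∑ k ∈ S, c k * b k / d k := by
  rw [le_div_iff₀ hD, mul_sum, ← hw]
  refine sum_le_sum fun k hk => ?_
  calc z * (c k * b k / d k) = c k * (b k * z) / d k := by ring
    _ ≤ c k * (d k * w k) / d k := by
      have := hc k hk; have := hd k hk
      gcongr c k * ?_ / d k
      exact hz k hk
    _ = c k * w k := by rw [mul_left_comm, mul_div_cancel_left₀ _ (hd k hk).ne']

theorem budget_eq_one_at_tight_point (hD : ∑ k ∈ S, c k * b k / d k ≠ 0) :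
    ∑ k ∈ S, c k * (b k * (1 / ∑ k ∈ S, c k * b k / d k) / d k) = 1 := by
  set D := ∑ k ∈ S, c k * b k / d k
  have hterm : ∀ k ∈ S, c k * (b k * (1 / D) / d k) = c k * b k / d k * (1 / D) :=
    fun k _ => by ring
  rw [sum_congr rfl hterm, ← sum_mul, mul_one_div_cancel hD]

end LinearProgram

theorem sum_Icc_one_div_pos {r K : ℕ} (hr : 0 < r) (hrK : r ≤ K) :
    0 < ∑ h ∈ Icc r K, (1 : ℝ) / h :=
  sum_pos (fun _ hh => one_div_pos.2 (Nat.cast_pos.2 (hr.trans_le (mem_Icc.1 hh).1)))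
    ⟨r, mem_Icc.2 ⟨le_rfl, hrK⟩⟩

/-- Analytical solution of the reformulated OPA linear program: the stated value
`zstar` is an upper bound for all feasible solutions and is attained at `wstar`. -/
theorem stmt_10 (I J : ℕ) (hI : 0 < I) (hJ : 0 < J)
    (Kij : ℕ → ℕ → ℕ) (hKij : ∀ i j, 0 < Kij i j)
    (t : ℕ → ℝ) (s : ℕ → ℕ → ℝ) (ht : ∀ i, 0 < t i) (hs : ∀ i j, 0 < s i j)
    (c : ℕ → ℕ → ℕ → ℕ) (hc : ∀ i j r, 1 ≤ c i j r)
    (zstar : ℝ)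
    (hzstar : zstar = 1 / (∑ i ∈ Finset.Icc 1 I, ∑ j ∈ Finset.Icc 1 J,
      ∑ r ∈ Finset.Icc 1 (Kij i j),
        (c i j r : ℝ) * (∑ h ∈ Finset.Icc r (Kij i j), (1 : ℝ) / h) / (t i * s i j)))
    (wstar : ℕ → ℕ → ℕ → ℝ)
    (hwstar : ∀ i j r, wstar i j r =
      (∑ h ∈ Finset.Icc r (Kij i j), (1 : ℝ) / h) * zstar / (t i * s i j)) :
    (∀ (z : ℝ) (w : ℕ → ℕ → ℕ → ℝ),
      (∀ i ∈ Finset.Icc 1 I, ∀ j ∈ Finset.Icc 1 J, ∀ r ∈ Finset.Icc 1 (Kij i j),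
        (∑ h ∈ Finset.Icc r (Kij i j), (1 : ℝ) / h) * z ≤ t i * s i j * w i j r) →
      (∑ i ∈ Finset.Icc 1 I, ∑ j ∈ Finset.Icc 1 J, ∑ r ∈ Finset.Icc 1 (Kij i j),
        (c i j r : ℝ) * w i j r = 1) →
      (∀ i j r, 0 ≤ w i j r) →
      z ≤ zstar) ∧
    ((∀ i ∈ Finset.Icc 1 I, ∀ j ∈ Finset.Icc 1 J, ∀ r ∈ Finset.Icc 1 (Kij i j),
        (∑ h ∈ Finset.Icc r (Kij i j), (1 : ℝ) / h) * zstar ≤ t i * s i j * wstar i j r) ∧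
      (∑ i ∈ Finset.Icc 1 I, ∑ j ∈ Finset.Icc 1 J, ∑ r ∈ Finset.Icc 1 (Kij i j),
        (c i j r : ℝ) * wstar i j r = 1) ∧
      (∀ i j r, 0 ≤ wstar i j r)) := by
  set S := (Icc 1 I).sigma fun i => (Icc 1 J).sigma fun j => Icc 1 (Kij i j)
  have hsum (f : ℕ → ℕ → ℕ → ℝ) : ∑ i ∈ Icc 1 I, ∑ j ∈ Icc 1 J, ∑ r ∈ Icc 1 (Kij i j), f i j r
      = ∑ x ∈ S, f x.1 x.2.1 x.2.2 := by simp only [S, sum_sigma]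
  have hmem : ∀ x ∈ S, x.1 ∈ Icc 1 I ∧ x.2.1 ∈ Icc 1 J ∧ x.2.2 ∈ Icc 1 (Kij x.1 x.2.1) :=
    fun x hx => (mem_sigma.1 hx).imp_right mem_sigma.1
  have hts (i j : ℕ) : 0 < t i * s i j := mul_pos (ht i) (hs i j)
  have hD : 0 < ∑ x ∈ S, (c x.1 x.2.1 x.2.2 : ℝ) *
      (∑ h ∈ Icc x.2.2 (Kij x.1 x.2.1), (1 : ℝ) / h) / (t x.1 * s x.1 x.2.1) := by
    refine sum_pos (fun x hx => ?_) ⟨⟨1, 1, 1⟩, by simpa [S] using ⟨hI, hJ, hKij 1 1⟩⟩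
    have hr := mem_Icc.1 (hmem x hx).2.2
    have := sum_Icc_one_div_pos hr.1 hr.2
    have := hts x.1 x.2.1
    have : (0 : ℝ) < c x.1 x.2.1 x.2.2 := Nat.cast_pos.2 (hc _ _ _)
    positivity
  rw [hsum] at hzstar
  refine ⟨fun z w hz hw _ => ?_, fun i _ j _ r _ => ?_, ?_, fun i j r => ?_⟩
  · rw [hsum] at hw
    rw [hzstar]
    refine le_one_div_sum_of_feasible (fun _ _ => Nat.cast_nonneg _) (fun x _ => hts _ _) hD
      (fun x hx => ?_) hw
    obtain ⟨hi, hj, hr⟩ := hmem x hx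
    exact hz _ hi _ hj _ hr
  · rw [hwstar, mul_div_cancel₀ _ (hts i j).ne']
  · simp_rw [hwstar, hsum, hzstar]
    exact budget_eq_one_at_tight_point hD.ne'
  · have : 0 < zstar := hzstar ▸ one_div_pos.2 hD
    have := hts i j
    rw [hwstar]
    positivity
end

section
/- Weak duality / optimality bound for OPA: if z ∈ ℝ and w_{ijr} ≥ 0 satisfy (∑_{h=r}^{K_{ij}} 1/h)·z ≤ t_i s_{ij} w_{ijr} for all (i,j,r) and ∑_{i,j,r} c_{ijr} w_{ijr} = 1, then z ≤ 1/(∑_{i,j,r} c_{ijr}(∑_{h=r}^{K_{ij}}1/h)/(t_i s_{ij})). -/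
open Finset

/-! Multiplying the `k`-th constraint `a k * z ≤ b k * w k` by `c k / b k ≥ 0` and summing gives
`z * ∑ c k * a k / b k ≤ ∑ c k * w k = 1`; the sum on the left is positive because the
normalisation forces the index set to be nonempty. For OPA, `a` is the harmonic tail
`∑_{h=r}^{K_{ij}} 1/h`, `b = t_i s_{ij}`, and the index set is that of the triples `(i, j, r)`. -/

theorem harmonic_tail_pos {r K : ℕ} (hr : 1 ≤ r) (hrK : r ≤ K) :
    0 < ∑ h ∈ Icc r K, (1 : ℝ) / h :=
  sum_pos (fun _ hh => one_div_pos.mpr (Nat.cast_pos.mpr ((mem_Icc.mp hh).1.trans_lt' hr)))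
    (nonempty_Icc.mpr hrK)

theorem le_one_div_of_feasible {ι : Type*} (S : Finset ι) (a b c w : ι → ℝ) (z : ℝ)
    (ha : ∀ k ∈ S, 0 < a k) (hb : ∀ k ∈ S, 0 < b k) (hc : ∀ k ∈ S, 0 < c k)
    (hfeas : ∀ k ∈ S, a k * z ≤ b k * w k) (hnorm : ∑ k ∈ S, c k * w k = 1) :
    z ≤ 1 / ∑ k ∈ S, c k * a k / b k := by
  have hS : S.Nonempty := nonempty_of_sum_ne_zero (hnorm ▸ one_ne_zero)
  have hD : 0 < ∑ k ∈ S, c k * a k / b k :=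
    sum_pos (fun k hk => div_pos (mul_pos (hc k hk) (ha k hk)) (hb k hk)) hS
  rw [le_div_iff₀ hD, ← hnorm, mul_sum]
  refine sum_le_sum fun k hk => ?_
  calc z * (c k * a k / b k) = c k / b k * (a k * z) := by ring
    _ ≤ c k / b k * (b k * w k) :=
        mul_le_mul_of_nonneg_left (hfeas k hk) (div_pos (hc k hk) (hb k hk)).le
    _ = c k * w k := by field_simp [(hb k hk).ne']

theorem stmt_11_general (I J : ℕ)
    (Kij : ℕ → ℕ → ℕ)
    (t : ℕ → ℝ) (s : ℕ → ℕ → ℝ) (ht : ∀ i, 0 < t i) (hs : ∀ i j, 0 < s i j)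
    (c : ℕ → ℕ → ℕ → ℝ) (hc : ∀ i j r, 0 < c i j r)
    (z : ℝ) (w : ℕ → ℕ → ℕ → ℝ)
    (hfeas : ∀ i ∈ Finset.Icc 1 I, ∀ j ∈ Finset.Icc 1 J, ∀ r ∈ Finset.Icc 1 (Kij i j),
      (∑ h ∈ Finset.Icc r (Kij i j), (1 : ℝ) / h) * z ≤ t i * s i j * w i j r)
    (hnorm : ∑ i ∈ Finset.Icc 1 I, ∑ j ∈ Finset.Icc 1 J, ∑ r ∈ Finset.Icc 1 (Kij i j),
      c i j r * w i j r = 1) :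
    z ≤ 1 / (∑ i ∈ Finset.Icc 1 I, ∑ j ∈ Finset.Icc 1 J, ∑ r ∈ Finset.Icc 1 (Kij i j),
      c i j r * (∑ h ∈ Finset.Icc r (Kij i j), (1 : ℝ) / h) / (t i * s i j)) := by
  let S := (Icc 1 I).sigma fun i => (Icc 1 J).sigma fun j => Icc 1 (Kij i j)
  have key := le_one_div_of_feasible S
    (fun x => ∑ h ∈ Icc x.2.2 (Kij x.1 x.2.1), (1 : ℝ) / h) (fun x => t x.1 * s x.1 x.2.1)
    (fun x => c x.1 x.2.1 x.2.2) (fun x => w x.1 x.2.1 x.2.2) z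
    (fun x hx => by
      obtain ⟨-, -, hr⟩ := by simpa only [S, mem_sigma] using hx
      exact harmonic_tail_pos (mem_Icc.mp hr).1 (mem_Icc.mp hr).2)
    (fun x _ => mul_pos (ht _) (hs _ _)) (fun x _ => hc _ _ _)
    (fun x hx => by
      obtain ⟨hi, hj, hr⟩ := by simpa only [S, mem_sigma] using hx
      exact hfeas _ hi _ hj _ hr)
    (by simpa only [S, sum_sigma] using hnorm)
  simpa only [S, sum_sigma] using key

/-- Weak duality / optimality bound for OPA. -/
theorem stmt_11 (I J : ℕ) (hI : 0 < I) (hJ : 0 < J)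
    (Kij : ℕ → ℕ → ℕ) (hKij : ∀ i j, 0 < Kij i j)
    (t : ℕ → ℝ) (s : ℕ → ℕ → ℝ) (ht : ∀ i, 0 < t i) (hs : ∀ i j, 0 < s i j)
    (c : ℕ → ℕ → ℕ → ℝ) (hc : ∀ i j r, 0 < c i j r)
    (z : ℝ) (w : ℕ → ℕ → ℕ → ℝ) (hwnn : ∀ i j r, 0 ≤ w i j r)
    (hfeas : ∀ i ∈ Finset.Icc 1 I, ∀ j ∈ Finset.Icc 1 J, ∀ r ∈ Finset.Icc 1 (Kij i j),
      (∑ h ∈ Finset.Icc r (Kij i j), (1 : ℝ) / h) * z ≤ t i * s i j * w i j r)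
    (hnorm : ∑ i ∈ Finset.Icc 1 I, ∑ j ∈ Finset.Icc 1 J, ∑ r ∈ Finset.Icc 1 (Kij i j),
      c i j r * w i j r = 1) :
    z ≤ 1 / (∑ i ∈ Finset.Icc 1 I, ∑ j ∈ Finset.Icc 1 J, ∑ r ∈ Finset.Icc 1 (Kij i j),
      c i j r * (∑ h ∈ Finset.Icc r (Kij i j), (1 : ℝ) / h) / (t i * s i j)) :=
  stmt_11_general I J Kij t s ht hs c hc z w hfeas hnorm
end

section
/- In the GOPA second-stage problem, if U*_{ijr} ≥ 0 with ∑_{r=1}^{K_{ij}} U*_{ijr} = 1 for every (i,j), and there are no missing or duplicate rankings (c_{ijr} = 1), then the optimal value z* = 1/(∑_{i=1}^{I}∑_{j=1}^{J} K_{ij}/(t_i s_{ij})) is independent of the utility distributions U*_{ijr}. -/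
open Finset

/-- GOPA second-stage optimal value is independent of the utility distributions. -/
theorem stmt_12 (I J : ℕ) (hI : 0 < I) (hJ : 0 < J)
    (Kij : ℕ → ℕ → ℕ) (hKij : ∀ i j, 0 < Kij i j)
    (t : ℕ → ℝ) (s : ℕ → ℕ → ℝ) (ht : ∀ i, 0 < t i) (hs : ∀ i j, 0 < s i j)
    (U : ℕ → ℕ → ℕ → ℝ) (hUnn : ∀ i j r, 0 ≤ U i j r)
    (hUsum : ∀ i ∈ Finset.Icc 1 I, ∀ j ∈ Finset.Icc 1 J,
      ∑ r ∈ Finset.Icc 1 (Kij i j), U i j r = 1) :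
    1 / (∑ i ∈ Finset.Icc 1 I, ∑ j ∈ Finset.Icc 1 J, ∑ r ∈ Finset.Icc 1 (Kij i j),
        (Kij i j : ℝ) * U i j r / (t i * s i j)) =
    1 / (∑ i ∈ Finset.Icc 1 I, ∑ j ∈ Finset.Icc 1 J,
        (Kij i j : ℝ) / (t i * s i j)) := by
  congr 1
  refine Finset.sum_congr rfl fun i hi => Finset.sum_congr rfl fun j hj => ?_
  rw [show (∑ r ∈ Finset.Icc 1 (Kij i j), (Kij i j : ℝ) * U i j r / (t i * s i j))
      = (Kij i j : ℝ) / (t i * s i j) * ∑ r ∈ Finset.Icc 1 (Kij i j), U i j r by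
    rw [Finset.mul_sum]; exact Finset.sum_congr rfl fun r _ => by ring]
  rw [hUsum i hi j hj, mul_one]
end

section
/- Risk preference independence in GOPA: with the analytical solution w*_{ijr} = K_{ij} U*_{ijr} z*/(t_i s_{ij}) and no missing/duplicate rankings, the attribute-under-expert weight w*_{ij} = ∑_{r=1}^{K_{ij}} w*_{ijr} equals K_{ij} z*/(t_i s_{ij}), which does not depend on the utility distribution (U*_{ijr})_r. Consequently the aggregated expert weights W_i^Q = ∑_j w*_{ij} and attribute weights W_j^N = ∑_i w*_{ij} are independent of the U*_{ijr}. -/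
open Finset

/-- Risk preference independence in GOPA: attribute-under-expert weights, expert
weights, and attribute weights do not depend on the utility distributions. -/
theorem stmt_13 (I J : ℕ) (hI : 0 < I) (hJ : 0 < J)
    (Kij : ℕ → ℕ → ℕ) (hKij : ∀ i j, 0 < Kij i j)
    (t : ℕ → ℝ) (s : ℕ → ℕ → ℝ) (ht : ∀ i, 0 < t i) (hs : ∀ i j, 0 < s i j)
    (U : ℕ → ℕ → ℕ → ℝ) (hUnn : ∀ i j r, 0 ≤ U i j r)
    (hUsum : ∀ i ∈ Finset.Icc 1 I, ∀ j ∈ Finset.Icc 1 J,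
      ∑ r ∈ Finset.Icc 1 (Kij i j), U i j r = 1)
    (zstar : ℝ)
    (hz : zstar = 1 / (∑ i ∈ Finset.Icc 1 I, ∑ j ∈ Finset.Icc 1 J,
      (Kij i j : ℝ) / (t i * s i j)))
    (w : ℕ → ℕ → ℕ → ℝ)
    (hw : ∀ i j r, w i j r = (Kij i j : ℝ) * U i j r * zstar / (t i * s i j)) :
    (∀ i ∈ Finset.Icc 1 I, ∀ j ∈ Finset.Icc 1 J,
      ∑ r ∈ Finset.Icc 1 (Kij i j), w i j r = (Kij i j : ℝ) * zstar / (t i * s i j)) ∧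
    (∀ i ∈ Finset.Icc 1 I,
      ∑ j ∈ Finset.Icc 1 J, ∑ r ∈ Finset.Icc 1 (Kij i j), w i j r =
        ∑ j ∈ Finset.Icc 1 J, (Kij i j : ℝ) * zstar / (t i * s i j)) ∧
    (∀ j ∈ Finset.Icc 1 J,
      ∑ i ∈ Finset.Icc 1 I, ∑ r ∈ Finset.Icc 1 (Kij i j), w i j r =
        ∑ i ∈ Finset.Icc 1 I, (Kij i j : ℝ) * zstar / (t i * s i j)) := by
  have key : ∀ i ∈ Finset.Icc 1 I, ∀ j ∈ Finset.Icc 1 J,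
      ∑ r ∈ Finset.Icc 1 (Kij i j), w i j r = (Kij i j : ℝ) * zstar / (t i * s i j) := by
    intro i hi j hj
    calc ∑ r ∈ Finset.Icc 1 (Kij i j), w i j r
        = ∑ r ∈ Finset.Icc 1 (Kij i j), U i j r * ((Kij i j : ℝ) * zstar / (t i * s i j)) := by
          refine Finset.sum_congr rfl fun r _ => ?_
          rw [hw]; ring
      _ = (∑ r ∈ Finset.Icc 1 (Kij i j), U i j r) * ((Kij i j : ℝ) * zstar / (t i * s i j)) := by
          rw [Finset.sum_mul]
      _ = (Kij i j : ℝ) * zstar / (t i * s i j) := by rw [hUsum i hi j hj, one_mul]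
  refine ⟨key, fun i hi => Finset.sum_congr rfl fun j hj => key i hi j hj,
    fun j hj => Finset.sum_congr rfl fun i hi => key i hi j hj⟩
end
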